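/- arXiv:1510.00365 — 4 statements merged into one kernel-verified Lean document; each statement's English description precedes it below -/
import Mathlib

section
/- In a biorderable group, every maximal abelian subgroup is isolated: if M is an abelian subgroup not properly contained in any abelian subgroup, then g^p ∈ M for some nonzero integer p implies g ∈ M. -/
section Aux

variable {G : Type*} [Group G] [LinearOrder G]
    [CovariantClass G G (· * ·) (· ≤ ·)]
    [CovariantClass G G (Function.swap (· * ·)) (· ≤ ·)]

private lemma aux_pow_lt_pow {a b : G} (h : a < b) : ∀ n : ℕ, a ^ (n + 1) < b ^ (n + 1)
  | 0 => by simpa using h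
  | n + 1 => by
    have ih := aux_pow_lt_pow h n
    calc a ^ (n + 2) = a ^ (n + 1) * a := by rw [pow_succ]
    _ < b ^ (n + 1) * a := mul_lt_mul_left ih a
    _ < b ^ (n + 1) * b := mul_lt_mul_right h _
    _ = b ^ (n + 2) := (pow_succ b (n + 1)).symm

private lemma aux_pow_injective {a b : G} {n : ℕ} (hn : n ≠ 0) (h : a ^ n = b ^ n) :
    a = b := by
  obtain ⟨m, rfl⟩ : ∃ m, n = m + 1 := ⟨n - 1, by omega⟩
  by_contra hne
  rcases lt_or_gt_of_ne hne with hlt | hlt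
  · exact absurd h (aux_pow_lt_pow hlt m).ne
  · exact absurd h.symm (aux_pow_lt_pow hlt m).ne

private lemma aux_zpow_injective {p : ℤ} (hp : p ≠ 0) {a b : G} (h : a ^ p = b ^ p) :
    a = b := by
  rcases hp.lt_or_gt with hneg | hpos
  · obtain ⟨n, hn, rfl⟩ : ∃ n : ℕ, n ≠ 0 ∧ p = -(n : ℤ) :=
      ⟨p.natAbs, by omega, by omega⟩
    rw [zpow_neg, zpow_neg, inv_inj, zpow_natCast, zpow_natCast] at h
    exact aux_pow_injective hn h
  · obtain ⟨n, hn, rfl⟩ : ∃ n : ℕ, n ≠ 0 ∧ p = (n : ℤ) := ⟨p.natAbs, by omega, by omega⟩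
    rw [zpow_natCast, zpow_natCast] at h
    exact aux_pow_injective hn h

end Aux

/-- In a biorderable group, every maximal abelian subgroup is isolated:
if `M` is an abelian subgroup not properly contained in any abelian subgroup,
and `g ^ p ∈ M` for some nonzero integer `p`, then `g ∈ M`. -/
theorem biorderable_maximal_abelian_isolated {G : Type*} [Group G] [LinearOrder G]
    [CovariantClass G G (· * ·) (· ≤ ·)]
    [CovariantClass G G (Function.swap (· * ·)) (· ≤ ·)]
    (M : Subgroup G)
    (habelian : ∀ x ∈ M, ∀ y ∈ M, x * y = y * x)
    (hmax : ∀ N : Subgroup G, (∀ x ∈ N, ∀ y ∈ N, x * y = y * x) → M ≤ N → N = M)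
    (g : G) (p : ℤ) (hp : p ≠ 0) (hgp : g ^ p ∈ M) :
    g ∈ M := by
  -- g commutes with every element of M
  have hcomm : ∀ m ∈ M, m * g = g * m := by
    intro m hm
    have h1 : (m * g * m⁻¹) ^ p = g ^ p := by
      rw [conj_zpow, habelian m hm (g ^ p) hgp]
      group
    have := aux_zpow_injective hp h1
    calc m * g = (m * g * m⁻¹) * m := by group
    _ = g * m := by rw [this]
  -- the set M ∪ {g} pairwise commutes
  set S : Set G := ↑M ∪ {g} with hS
  have hScomm : ∀ x ∈ S, ∀ y ∈ S, x * y = y * x := by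
    rintro x (hx | rfl) y (hy | rfl)
    · exact habelian x hx y hy
    · exact (hcomm x hx)
    · exact (hcomm y hy).symm
    · rfl
  have hNcomm : ∀ x ∈ Subgroup.closure S, ∀ y ∈ Subgroup.closure S, x * y = y * x := by
    intro x hx y hy
    induction hx, hy using Subgroup.closure_induction₂ with
    | mem a b ha hb => exact hScomm a ha b hb
    | one_left => simp
    | one_right => simp
    | mul_left a b c _ _ _ h1 h2 => rw [mul_assoc, h2, ← mul_assoc, h1, mul_assoc]
    | mul_right a b c _ _ _ h1 h2 => rw [← mul_assoc, h1, mul_assoc, h2, ← mul_assoc]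
    | inv_left a b _ _ h => exact (Commute.inv_left h : _)
    | inv_right a b _ _ h => exact (Commute.inv_right h : _)
  have hMle : M ≤ Subgroup.closure S :=
    fun x hx => Subgroup.subset_closure (Or.inl hx)
  have hN := hmax (Subgroup.closure S) hNcomm hMle
  rw [← hN]
  exact Subgroup.subset_closure (Or.inr rfl)
end

section
/- Bounded packing passes to normal subgroups: if H has bounded packing in a finitely generated group G and K is a normal subgroup of H of finite index, then K has bounded packing in G. -/
/-- The word metric on a group `G` with respect to a generating set `S`:
the least length of a word in `S ∪ S⁻¹` representing `g⁻¹ * h`. -/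
noncomputable def wordDist {G : Type*} [Group G] (S : Set G) (g h : G) : ℕ :=
  sInf {n | ∃ l : List G, (∀ x ∈ l, x ∈ S ∨ x⁻¹ ∈ S) ∧ l.prod = g⁻¹ * h ∧ l.length = n}

/-- `H` has bounded packing in `G` (with word metric from `S`): for each `r` there is
`m` such that among any `m` pairwise distinct left cosets of `H`, some two cosets are
at distance greater than `r`. -/
def HasBoundedPacking {G : Type*} [Group G] (S : Set G) (H : Subgroup G) : Prop :=
  ∀ r : ℕ, ∃ m : ℕ, ∀ g : Fin m → G,
    (∀ i j, i ≠ j → (g i)⁻¹ * g j ∉ H) →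
    ∃ i j, i ≠ j ∧ ∀ h ∈ H, ∀ h' ∈ H, wordDist S (g i * h) (g j * h') > r

/-- Bounded packing passes to normal subgroups of finite index: if `H` has bounded
packing in the finitely generated group `G`, and `K ≤ H` is normal in `H` of finite
index, then `K` has bounded packing in `G`. -/
theorem boundedPacking_of_normal_finiteIndex {G : Type*} [Group G]
    (S : Set G) (hSfin : S.Finite) (hSgen : Subgroup.closure S = ⊤)
    (H K : Subgroup G)
    (hHbp : HasBoundedPacking S H)
    (hKH : K ≤ H)
    (hnormal : ∀ h ∈ H, ∀ k ∈ K, h * k * h⁻¹ ∈ K)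
    (hfin : (K.subgroupOf H).FiniteIndex) :
    HasBoundedPacking S K := by

  classical
  intro r
  obtain ⟨M, hM⟩ := hHbp r
  set n := (K.subgroupOf H).index with hn
  have hn0 : n ≠ 0 := hfin.index_ne_zero
  refine ⟨n * M + 1, fun g hg => ?_⟩
  haveI : Finite (H ⧸ K.subgroupOf H) := (Nat.card_ne_zero.mp hn0).2
  haveI := Fintype.ofFinite (H ⧸ K.subgroupOf H)
  have hcard : Fintype.card (H ⧸ K.subgroupOf H) = n := by
    rw [← Nat.card_eq_fintype_card]; rfl
  set φ : Fin (n * M + 1) → G ⧸ H := fun i => QuotientGroup.mk (g i) with hφ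
  set T : Finset (G ⧸ H) := Finset.image φ Finset.univ with hT
  have hfiber : ∀ a ∈ T, (Finset.univ.filter fun i => φ i = a).card ≤ n := by
    intro a ha
    rw [hT] at ha
    obtain ⟨i₀, -, hi₀⟩ := Finset.mem_image.mp ha
    have key : ∀ i ∈ Finset.univ.filter (fun i => φ i = a), (g i₀)⁻¹ * g i ∈ H := by
      intro i hi
      have : φ i₀ = φ i := by rw [hi₀, (Finset.mem_filter.mp hi).2]
      exact QuotientGroup.eq.mp this
    have := Finset.card_le_card_of_injOn
      (f := fun i => if h : (g i₀)⁻¹ * g i ∈ H then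
          (QuotientGroup.mk (⟨(g i₀)⁻¹ * g i, h⟩ : H) : H ⧸ K.subgroupOf H)
        else QuotientGroup.mk 1)
      (s := Finset.univ.filter fun i => φ i = a)
      (t := Finset.univ)
      (fun i _ => Finset.mem_univ _) ?_
    · simpa [hcard] using this
    · intro i hi j hj hij
      have hiH := key i hi
      have hjH := key j hj
      simp only [dif_pos hiH, dif_pos hjH] at hij
      have hK : (⟨(g i₀)⁻¹ * g i, hiH⟩ : H)⁻¹ * ⟨(g i₀)⁻¹ * g j, hjH⟩ ∈ K.subgroupOf H :=
        QuotientGroup.eq.mp hij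
      have hK' : (g i)⁻¹ * g j ∈ K := by
        have := Subgroup.mem_subgroupOf.mp hK
        simp only [Subgroup.coe_mul, Subgroup.coe_inv] at this
        convert this using 1
        group
      by_contra hne
      exact hg i j hne hK'
  have hle : n * M + 1 ≤ n * T.card := by
    have := Finset.card_le_mul_card_image (s := (Finset.univ : Finset (Fin (n * M + 1))))
      (f := φ) n hfiber
    simpa [hT] using this
  have hMT : M < T.card := by
    by_contra hc
    push_neg at hc
    have : n * T.card ≤ n * M := Nat.mul_le_mul_left n hc
    omega
  have hMle : M ≤ T.card := hMT.le
  set e : Fin M → T := fun k => T.equivFin.symm ⟨k, lt_of_lt_of_le k.2 hMle⟩ with he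
  have he_inj : Function.Injective e := by
    intro a b hab
    have h2 := congrArg Fin.val (T.equivFin.symm.injective hab)
    simp only [Fin.val_mk] at h2 ⊢
    exact Fin.ext h2
  have hsec : ∀ t : T, ∃ i, φ i = (t : G ⧸ H) := by
    intro t
    have ht : (t : G ⧸ H) ∈ Finset.image φ Finset.univ := t.2
    obtain ⟨i, -, hi⟩ := Finset.mem_image.mp ht
    exact ⟨i, hi⟩
  choose f hf using hsec
  set F : Fin M → Fin (n * M + 1) := fun k => f (e k) with hF
  have hφF : ∀ k, φ (F k) = (e k : G ⧸ H) := fun k => hf (e k)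
  have hFsep : ∀ k l, k ≠ l → (g (F k))⁻¹ * g (F l) ∉ H := by
    intro k l hkl hmem
    apply hkl
    apply he_inj
    apply Subtype.ext
    rw [← hφF k, ← hφF l]
    exact QuotientGroup.eq.mpr hmem
  obtain ⟨i, j, hij, hfar⟩ := hM (fun k => g (F k)) hFsep
  refine ⟨F i, F j, ?_, ?_⟩
  · intro hFij
    exact hFsep i j hij (by rw [hFij]; simpa using H.one_mem)
  · intro h hh h' hh'
    exact hfar h (hKH hh) h' (hKH hh')
end

section
/- Bounded packing is a commensurability invariant: if H has bounded packing in a finitely generated group G and K ≤ G satisfies [H : K ∩ H] < ∞ and [K : K ∩ H] < ∞, then K has bounded packing in G. -/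
section Aux

variable {G : Type*} [Group G] (S : Set G)

/-- Word length. -/
noncomputable def wlen (x : G) : ℕ :=
  sInf {n | ∃ l : List G, (∀ y ∈ l, y ∈ S ∨ y⁻¹ ∈ S) ∧ l.prod = x ∧ l.length = n}

lemma wordDist_eq_wlen (g h : G) : wordDist S g h = wlen S (g⁻¹ * h) := rfl

variable {S}

lemma wlen_set_nonempty (hSgen : Subgroup.closure S = ⊤) (x : G) :
    {n | ∃ l : List G, (∀ y ∈ l, y ∈ S ∨ y⁻¹ ∈ S) ∧ l.prod = x ∧ l.length = n}.Nonempty := by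
  have hx : x ∈ Subgroup.closure S := hSgen ▸ Subgroup.mem_top x
  rw [← Subgroup.mem_toSubmonoid, Subgroup.closure_toSubmonoid] at hx
  obtain ⟨l, hl, hprod⟩ := Submonoid.exists_list_of_mem_closure hx
  refine ⟨l.length, l, fun y hy => ?_, hprod, rfl⟩
  rcases hl y hy with h | h
  · exact Or.inl h
  · exact Or.inr (by simpa using h)

lemma wlen_exists (hSgen : Subgroup.closure S = ⊤) (x : G) :
    ∃ l : List G, (∀ y ∈ l, y ∈ S ∨ y⁻¹ ∈ S) ∧ l.prod = x ∧ l.length = wlen S x :=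
  Nat.sInf_mem (wlen_set_nonempty hSgen x)

lemma wlen_le {l : List G} (hl : ∀ y ∈ l, y ∈ S ∨ y⁻¹ ∈ S) {x : G} (hprod : l.prod = x) :
    wlen S x ≤ l.length :=
  Nat.sInf_le ⟨l, hl, hprod, rfl⟩

lemma wlen_mul_le (hSgen : Subgroup.closure S = ⊤) (x y : G) :
    wlen S (x * y) ≤ wlen S x + wlen S y := by
  obtain ⟨l1, h1, p1, n1⟩ := wlen_exists hSgen x
  obtain ⟨l2, h2, p2, n2⟩ := wlen_exists hSgen y
  have := wlen_le (S := S) (l := l1 ++ l2)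
    (fun z hz => by rcases List.mem_append.1 hz with h | h; exacts [h1 z h, h2 z h])
    (x := x * y) (by rw [List.prod_append, p1, p2])
  simpa [n1, n2] using this

lemma wlen_inv_le (hSgen : Subgroup.closure S = ⊤) (x : G) :
    wlen S x⁻¹ ≤ wlen S x := by
  obtain ⟨l, hl, pl, nl⟩ := wlen_exists hSgen x
  have := wlen_le (S := S) (l := (l.map fun z => z⁻¹).reverse)
    (fun z hz => by
      rw [List.mem_reverse, List.mem_map] at hz
      obtain ⟨w, hw, rfl⟩ := hz
      rcases hl w hw with h | h
      · exact Or.inr (by simpa using h)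
      · exact Or.inl h)
    (x := x⁻¹) (by rw [← List.prod_inv_reverse, pl])
  simpa [nl] using this

lemma wordDist_triangle (hSgen : Subgroup.closure S = ⊤) (a b c : G) :
    wordDist S a c ≤ wordDist S a b + wordDist S b c := by
  rw [wordDist_eq_wlen, wordDist_eq_wlen, wordDist_eq_wlen]
  have : a⁻¹ * c = (a⁻¹ * b) * (b⁻¹ * c) := by group
  rw [this]
  exact wlen_mul_le hSgen _ _

end Aux

/-- Bounded packing is a commensurability invariant: if `H` has bounded packing in
the finitely generated group `G`, and `K ≤ G` satisfies `[H : K ∩ H] < ∞` and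
`[K : K ∩ H] < ∞`, then `K` has bounded packing in `G`. -/
theorem boundedPacking_of_commensurable {G : Type*} [Group G]
    (S : Set G) (hSfin : S.Finite) (hSgen : Subgroup.closure S = ⊤)
    (H K : Subgroup G)
    (hHbp : HasBoundedPacking S H)
    (hfinH : ((K ⊓ H).subgroupOf H).FiniteIndex)
    (hfinK : ((K ⊓ H).subgroupOf K).FiniteIndex) :
    HasBoundedPacking S K := by
  classical
  set L : Subgroup G := K ⊓ H with hLdef
  -- Step A : L has bounded packing
  have hLbp : HasBoundedPacking S L := by
    intro r
    obtain ⟨m₀, hm₀⟩ := hHbp r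
    set n := ((K ⊓ H).subgroupOf H).index with hn
    haveI := hfinH
    haveI : Fintype (↥H ⧸ ((K ⊓ H).subgroupOf H)) := Fintype.ofFinite _
    have hncard : Fintype.card (↥H ⧸ ((K ⊓ H).subgroupOf H)) = n := by
      rw [hn, Subgroup.index, Nat.card_eq_fintype_card]
    refine ⟨m₀ * n + 1, ?_⟩
    intro g hg
    set q : Fin (m₀ * n + 1) → G ⧸ H := fun i => QuotientGroup.mk (g i) with hq
    -- each fiber of q has at most n elements
    have hfib : ∀ b ∈ Finset.univ.image q,
        (Finset.univ.filter fun i => q i = b).card ≤ n := by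
      intro b hb
      obtain ⟨i₀, _, hi₀⟩ := Finset.mem_image.1 hb
      set φ : Fin (m₀ * n + 1) → (↥H ⧸ ((K ⊓ H).subgroupOf H)) := fun i =>
        if h : (g i₀)⁻¹ * g i ∈ H then QuotientGroup.mk (⟨(g i₀)⁻¹ * g i, h⟩ : H)
        else QuotientGroup.mk 1 with hφ
      have : (Finset.univ.filter fun i => q i = b).card ≤
          (Finset.univ : Finset (↥H ⧸ ((K ⊓ H).subgroupOf H))).card := by
        refine Finset.card_le_card_of_injOn φ (fun _ _ => Finset.mem_univ _) ?_
        intro i hi j hj hij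
        simp only [Finset.mem_coe, Finset.mem_filter] at hi hj
        have hiH : (g i₀)⁻¹ * g i ∈ H := QuotientGroup.eq.1 (hi₀.trans hi.2.symm)
        have hjH : (g i₀)⁻¹ * g j ∈ H := QuotientGroup.eq.1 (hi₀.trans hj.2.symm)
        rw [hφ] at hij
        simp only [dif_pos hiH, dif_pos hjH] at hij
        have hmem := QuotientGroup.eq.1 hij
        rw [Subgroup.mem_subgroupOf] at hmem
        have : (g i)⁻¹ * g j ∈ K ⊓ H := by
          have : ((⟨(g i₀)⁻¹ * g i, hiH⟩ : H)⁻¹ * ⟨(g i₀)⁻¹ * g j, hjH⟩ : H) =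
              (⟨(g i)⁻¹ * g j, by
                have : (g i)⁻¹ * g j = ((g i₀)⁻¹ * g i)⁻¹ * ((g i₀)⁻¹ * g j) := by group
                rw [this]; exact H.mul_mem (H.inv_mem hiH) hjH⟩ : H) := by
            ext
            simp only [Subgroup.coe_mul, Subgroup.coe_inv]
            group
          rwa [this] at hmem
        by_contra hne
        exact hg i j hne (by rwa [← hLdef] at this)
      calc (Finset.univ.filter fun i => q i = b).card
          ≤ (Finset.univ : Finset (↥H ⧸ ((K ⊓ H).subgroupOf H))).card := this
        _ = n := by rw [Finset.card_univ, hncard]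
    have hcard : m₀ * n + 1 ≤ n * (Finset.univ.image q).card := by
      simpa using Finset.card_le_mul_card_image Finset.univ n hfib
    have hm0le : m₀ ≤ (Finset.univ.image q).card := by
      by_contra hcon
      push_neg at hcon
      have : n * (Finset.univ.image q).card ≤ n * m₀ :=
        Nat.mul_le_mul_left n (Nat.le_of_lt_succ (Nat.lt_succ_of_lt hcon))
      have hcomm : n * m₀ = m₀ * n := Nat.mul_comm _ _
      omega
    obtain ⟨T, hTsub, hTc⟩ := Finset.exists_subset_card_eq hm0le
    have : Fintype.card (↥T) = m₀ := by rw [Fintype.card_coe, hTc]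
    set e : Fin m₀ ≃ ↥T := (Fintype.equivFinOfCardEq this).symm with he
    have hsel : ∀ a : Fin m₀, ∃ i, q i = (e a : G ⧸ H) := by
      intro a
      have := hTsub (e a).2
      obtain ⟨i, _, hi⟩ := Finset.mem_image.1 this
      exact ⟨i, hi⟩
    choose f hf using hsel
    have hqf : ∀ a b : Fin m₀, a ≠ b → q (f a) ≠ q (f b) := by
      intro a b hab hqe
      rw [hf a, hf b] at hqe
      exact hab (e.injective (Subtype.ext hqe))
    obtain ⟨i, j, hij, hfar⟩ := hm₀ (fun a => g (f a)) (by
      intro a b hab hmem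
      exact hqf a b hab (QuotientGroup.eq.2 hmem))
    refine ⟨f i, f j, ?_, ?_⟩
    · intro hfe
      exact hqf i j hij (by rw [hfe])
    · intro h hh h' hh'
      exact hfar h (by rw [hLdef] at hh; exact hh.2) h' (by rw [hLdef] at hh'; exact hh'.2)
  -- Step B : a uniform bound for elements of K relative to L
  haveI := hfinK
  haveI : Fintype (↥K ⧸ ((K ⊓ H).subgroupOf K)) := Fintype.ofFinite _
  set R : ℕ := Finset.univ.sup
    (fun c : ↥K ⧸ ((K ⊓ H).subgroupOf K) => wlen S (((Quotient.out c : K) : G)⁻¹)) with hR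
  have hclose : ∀ k ∈ K, ∃ l ∈ L, wlen S (l⁻¹ * k) ≤ R := by
    intro k hk
    set c : ↥K ⧸ ((K ⊓ H).subgroupOf K) := QuotientGroup.mk (⟨k⁻¹, K.inv_mem hk⟩ : K) with hc
    have hout : QuotientGroup.mk (Quotient.out c) = c := Quotient.out_eq c
    have hmem : (Quotient.out c)⁻¹ * (⟨k⁻¹, K.inv_mem hk⟩ : K) ∈ ((K ⊓ H).subgroupOf K) :=
      QuotientGroup.eq.1 (hout.trans rfl)
    rw [Subgroup.mem_subgroupOf] at hmem
    set u : G := ((Quotient.out c : K) : G) with hu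
    have hmem' : u⁻¹ * k⁻¹ ∈ K ⊓ H := by
      simpa [hu] using hmem
    refine ⟨(u⁻¹ * k⁻¹)⁻¹, ?_, ?_⟩
    · rw [hLdef]; exact (K ⊓ H).inv_mem hmem'
    · have : ((u⁻¹ * k⁻¹)⁻¹)⁻¹ * k = u⁻¹ := by group
      rw [this, hR, hu]
      exact Finset.le_sup
        (f := fun c : ↥K ⧸ ((K ⊓ H).subgroupOf K) => wlen S (((Quotient.out c : K) : G)⁻¹))
        (Finset.mem_univ c)
  -- conclude
  intro r
  obtain ⟨m, hm⟩ := hLbp (r + 2 * R)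
  refine ⟨m, ?_⟩
  intro g hg
  obtain ⟨i, j, hij, hfar⟩ := hm g (by
    intro a b hab hmem
    exact hg a b hab (by rw [hLdef] at hmem; exact hmem.1))
  refine ⟨i, j, hij, ?_⟩
  intro k hk k' hk'
  obtain ⟨l, hl, hlen⟩ := hclose k hk
  obtain ⟨l', hl', hlen'⟩ := hclose k' hk'
  have hL' : l ∈ L := hl
  have hfarll : wordDist S (g i * l) (g j * l') > r + 2 * R := hfar l hl l' hl'
  have htri1 : wordDist S (g i * l) (g j * l') ≤
      wordDist S (g i * l) (g i * k) + wordDist S (g i * k) (g j * k') +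
      wordDist S (g j * k') (g j * l') := by
    calc wordDist S (g i * l) (g j * l')
        ≤ wordDist S (g i * l) (g j * k') + wordDist S (g j * k') (g j * l') :=
          wordDist_triangle hSgen _ _ _
      _ ≤ wordDist S (g i * l) (g i * k) + wordDist S (g i * k) (g j * k') +
          wordDist S (g j * k') (g j * l') := by
          have := wordDist_triangle hSgen (g i * l) (g i * k) (g j * k')
          omega
  have h1 : wordDist S (g i * l) (g i * k) ≤ R := by
    rw [wordDist_eq_wlen]
    have : (g i * l)⁻¹ * (g i * k) = l⁻¹ * k := by group
    rw [this]
    exact hlen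
  have h2 : wordDist S (g j * k') (g j * l') ≤ R := by
    rw [wordDist_eq_wlen]
    have : (g j * k')⁻¹ * (g j * l') = (l'⁻¹ * k')⁻¹ := by group
    rw [this]
    exact le_trans (wlen_inv_le hSgen _) hlen'
  omega
end

section
/- Helly property for convex subsets of a median algebra: if Y₁, …, Y_r are pairwise intersecting convex subsets of a median algebra, then their total intersection is nonempty. -/
/-- A median algebra: a set with a ternary median operation satisfying the standard
(Sholander) axioms: symmetry in the first two and last two arguments, majority,
and the short distributive law. -/
class MedianAlgebra (M : Type*) where
  med : M → M → M → M
  med_comm : ∀ a b c, med a b c = med b a c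
  med_comm' : ∀ a b c, med a b c = med a c b
  med_idem : ∀ a b, med a a b = a
  med_assoc : ∀ a b c d, med (med a b c) d c = med a (med b d c) c

/-- A subset of a median algebra is convex if it is closed under medians with an
arbitrary third point. -/
def MedianConvex {M : Type*} [MedianAlgebra M] (Y : Set M) : Prop :=
  ∀ a ∈ Y, ∀ b ∈ Y, ∀ c : M, MedianAlgebra.med a b c ∈ Y

lemma medianHelly_triple {M : Type*} [MedianAlgebra M] {A B C : Set M}
    (hA : MedianConvex A) (hB : MedianConvex B) (hC : MedianConvex C)
    (hAB : (A ∩ B).Nonempty) (hAC : (A ∩ C).Nonempty) (hBC : (B ∩ C).Nonempty) :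
    (A ∩ B ∩ C).Nonempty := by
  obtain ⟨c, hcA, hcB⟩ := hAB
  obtain ⟨b, hbA, hbC⟩ := hAC
  obtain ⟨a, haB, haC⟩ := hBC
  refine ⟨MedianAlgebra.med a b c, ⟨?_, ?_⟩, ?_⟩
  · rw [MedianAlgebra.med_comm, MedianAlgebra.med_comm']
    exact hA b hbA c hcA a
  · rw [MedianAlgebra.med_comm']
    exact hB a haB c hcB b
  · exact hC a haC b hbC c

lemma medianHelly_aux {M : Type*} [MedianAlgebra M] :
    ∀ r : ℕ, ∀ Y : Fin (r + 1) → Set M, (∀ i, MedianConvex (Y i)) →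
    (∀ i j, (Y i ∩ Y j).Nonempty) → (⋂ i, Y i).Nonempty := by
  intro r
  induction r with
  | zero =>
    intro Y _ hpair
    obtain ⟨x, hx, _⟩ := hpair 0 0
    exact ⟨x, Set.mem_iInter.2 fun i => by fin_cases i; exact hx⟩
  | succ r ih =>
    intro Y hconv hpair
    set L : Fin (r + 2) := Fin.last (r + 1)
    set Z : Fin (r + 1) → Set M := fun i => Y i.castSucc ∩ Y L with hZ
    have hZconv : ∀ i, MedianConvex (Z i) := by
      intro i a ha b hb c
      exact ⟨hconv _ a ha.1 b hb.1 c, hconv _ a ha.2 b hb.2 c⟩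
    have hZpair : ∀ i j, (Z i ∩ Z j).Nonempty := by
      intro i j
      obtain ⟨x, hx⟩ := medianHelly_triple (hconv i.castSucc) (hconv j.castSucc)
        (hconv L) (hpair _ _) (hpair _ _) (hpair _ _)
      exact ⟨x, ⟨hx.1.1, hx.2⟩, ⟨hx.1.2, hx.2⟩⟩
    obtain ⟨x, hx⟩ := ih Z hZconv hZpair
    rw [Set.mem_iInter] at hx
    refine ⟨x, Set.mem_iInter.2 fun i => ?_⟩
    refine Fin.lastCases ?_ ?_ i
    · exact (hx 0).2
    · exact fun j => (hx j).1

/-- Helly property for convex subsets of a median algebra: finitely many pairwise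
intersecting convex subsets have a common point. -/
theorem medianAlgebra_helly {M : Type*} [MedianAlgebra M] (r : ℕ) (hr : 0 < r)
    (Y : Fin r → Set M) (hconv : ∀ i, MedianConvex (Y i))
    (hpair : ∀ i j, (Y i ∩ Y j).Nonempty) :
    (⋂ i, Y i).Nonempty := by
  cases r with
  | zero => omega
  | succ s => exact medianHelly_aux s Y hconv hpair
end
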